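/- arXiv:2301.09036 — 2 statements merged into one kernel-verified Lean document; each statement's English description precedes it below -/
import Mathlib

section
/- Let G be a finite simple 3-regular bipartite graph. Then 16·M(G,4) = 2·N(P₂+3K₂) + 2·N(P₃+2K₂). -/
open SimpleGraph

/-- The number of `k`-matchings of a graph `G`: `k`-element sets of pairwise disjoint
edges of `G`, identified with the matching subgraphs of `G` having exactly `k` edges. -/
noncomputable def numMatchings {V : Type*} (G : SimpleGraph V) (k : ℕ) : ℕ :=
  Set.ncard {H : G.Subgraph | H.IsMatching ∧ H.edgeSet.ncard = k}

/-- The number of subgraphs of `G` isomorphic to the graph `X`. -/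
noncomputable def numSubgraphs {V W : Type*} (G : SimpleGraph V) (X : SimpleGraph W) : ℕ :=
  Set.ncard {H : G.Subgraph | Nonempty (H.coe ≃g X)}

/-!
Count triples `(s, f, e)` with `s` a 4-matching, `f ∈ s` and `e ≠ f` an edge meeting `f`. In a
3-regular graph every edge meets exactly four others, so each matching lies in `4 · 4` triples.
On the other side, `s ∪ {e}` has five edges and `e` meets either `f` alone, giving a copy of
`P₂ + 3K₂`, or `f` and one more edge of `s`, giving a copy of `P₃ + 2K₂`. Every copy of either
kind comes from exactly two triples: either edge of the `P₂` can play `e`, respectively `e` is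
the middle edge of the `P₃` and `f` either of its end edges.

Copies are encoded as injective images of a fixed edge list on `Fin n`; the number of triples
above a copy is invariant under injective relabelling, so it is computed on the list itself.
-/

open Finset

section EdgeFinset

variable {V W : Type*} [DecidableEq V] [DecidableEq W]

def IsEdgeMatching (t : Finset (Sym2 V)) : Prop :=
  (t : Set (Sym2 V)).PairwiseDisjoint Sym2.toFinset

instance : DecidablePred (IsEdgeMatching (V := V)) := fun t =>
  inferInstanceAs (Decidable ((t : Set (Sym2 V)).Pairwise _))

def edgeSupport (t : Finset (Sym2 V)) : Finset V := t.biUnion Sym2.toFinset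

def Realizes {n : ℕ} (p : Finset (Sym2 (Fin n))) (t : Finset (Sym2 V)) : Prop :=
  ∃ F : Fin n → V, Function.Injective F ∧ p.image (Sym2.map F) = t

/-- The pairs `(e, f)` such that `t` arises from the matching `t.erase e` by attaching `e` to its
edge `f`. -/
def attachments (t : Finset (Sym2 V)) : Finset (Sym2 V × Sym2 V) :=
  (t ×ˢ t).filter fun ef => ef.1 ≠ ef.2 ∧ ¬Disjoint ef.1.toFinset ef.2.toFinset ∧
    IsEdgeMatching (t.erase ef.1)

variable {s t : Finset (Sym2 V)} {e f : Sym2 V}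

lemma IsEdgeMatching.notMem_of_not_disjoint (hs : IsEdgeMatching s) (hf : f ∈ s) (hef : e ≠ f)
    (hmeet : ¬Disjoint e.toFinset f.toFinset) : e ∉ s :=
  fun he => hmeet (hs he hf hef)

lemma edgeSupport_insert : edgeSupport (insert e t) = e.toFinset ∪ edgeSupport t :=
  biUnion_insert

lemma card_edgeSupport (ht : IsEdgeMatching t) (hloop : ∀ e ∈ t, ¬e.IsDiag) :
    #(edgeSupport t) = 2 * #t := by
  rw [edgeSupport, card_biUnion ht,
    sum_congr rfl fun e he => Sym2.card_toFinset_of_not_isDiag e (hloop e he), sum_const,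
    smul_eq_mul, mul_comm]

lemma Sym2.toFinset_map (F : V → W) (e : Sym2 V) : (e.map F).toFinset = e.toFinset.image F := by
  induction e using Sym2.ind with
  | _ x y => simp [Sym2.toFinset_mk_eq, image_insert]

lemma edgeSupport_image (F : V → W) (t : Finset (Sym2 V)) :
    edgeSupport (t.image (Sym2.map F)) = (edgeSupport t).image F := by
  simp only [edgeSupport, image_biUnion, biUnion_image, Sym2.toFinset_map]

variable {F : V → W}

lemma isEdgeMatching_image_iff (hF : Function.Injective F) :
    IsEdgeMatching (t.image (Sym2.map F)) ↔ IsEdgeMatching t := by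
  rw [IsEdgeMatching, coe_image, (Sym2.map.injective hF).injOn.pairwiseDisjoint_image]
  simp only [Set.PairwiseDisjoint, Set.Pairwise, Function.onFun, Function.comp_apply,
    Sym2.toFinset_map, disjoint_image hF, IsEdgeMatching]

lemma card_attachments_image (hF : Function.Injective F) (t : Finset (Sym2 V)) :
    #(attachments (t.image (Sym2.map F))) = #(attachments t) := by
  have hm := Sym2.map.injective hF
  rw [attachments, ← prodMap_image_product, filter_image,
    card_image_of_injective _ (hm.prodMap hm), attachments]
  refine congrArg card (filter_congr fun ef _ => ?_)
  simp only [Prod.map_fst, Prod.map_snd, hm.ne_iff, Sym2.toFinset_map, disjoint_image hF,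
    ← image_erase hm, isEdgeMatching_image_iff hF]

lemma injective_of_le_card_edgeSupport {n : ℕ} {p : Finset (Sym2 (Fin n))} {F : Fin n → V}
    (h : n ≤ #(edgeSupport (p.image (Sym2.map F)))) : Function.Injective F := by
  have hle : #(edgeSupport (p.image (Sym2.map F))) ≤ #(univ.image F) := by
    rw [edgeSupport_image]
    exact card_le_card (image_subset_image (subset_univ _))
  have hcard : #(univ.image F) = #(univ : Finset (Fin n)) :=
    le_antisymm card_image_le (by simpa using h.trans hle)
  exact fun a b hab => card_image_iff.1 hcard (mem_univ a) (mem_univ b) hab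

namespace Realizes

variable {n : ℕ} {p : Finset (Sym2 (Fin n))}

lemma card_eq (h : Realizes p t) : #t = #p := by
  obtain ⟨F, hF, rfl⟩ := h
  exact card_image_of_injective _ (Sym2.map.injective hF)

lemma card_edgeSupport_eq (h : Realizes p t) : #(edgeSupport t) = #(edgeSupport p) := by
  obtain ⟨F, hF, rfl⟩ := h
  rw [edgeSupport_image, card_image_of_injective _ hF]

lemma card_attachments_eq (h : Realizes p t) : #(attachments t) = #(attachments p) := by
  obtain ⟨F, hF, rfl⟩ := h
  exact card_attachments_image hF p

end Realizes

end EdgeFinset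

section Shapes

variable {V : Type*} [DecidableEq V]

def edgesP₂Plus3K₂ : Finset (Sym2 (Fin 9)) := {s(0, 1), s(1, 2), s(3, 4), s(5, 6), s(7, 8)}

def edgesP₃Plus2K₂ : Finset (Sym2 (Fin 8)) := {s(0, 1), s(1, 2), s(2, 3), s(4, 5), s(6, 7)}

lemma edgeSupport_edgesP₂Plus3K₂ : edgeSupport edgesP₂Plus3K₂ = univ := by decide

lemma edgeSupport_edgesP₃Plus2K₂ : edgeSupport edgesP₃Plus2K₂ = univ := by decide

lemma card_attachments_edgesP₂Plus3K₂ : #(attachments edgesP₂Plus3K₂) = 2 := by decide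

lemma card_attachments_edgesP₃Plus2K₂ : #(attachments edgesP₃Plus2K₂) = 2 := by decide

variable {s : Finset (Sym2 V)} {e f g : Sym2 V}

lemma realizes_edgesP₂Plus3K₂ (hloop : ∀ x ∈ insert e s, ¬x.IsDiag) (hs : IsEdgeMatching s)
    (hcard : #s = 4) (hf : f ∈ s) (hef : e ≠ f) (hmeet : ¬Disjoint e.toFinset f.toFinset)
    (honly : ∀ g ∈ s, ¬Disjoint e.toFinset g.toFinset → g = f) :
    Realizes edgesP₂Plus3K₂ (insert e s) := by
  obtain ⟨b, hbe, hbf⟩ := not_disjoint_iff.1 hmeet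
  rw [Sym2.mem_toFinset] at hbe hbf
  obtain ⟨a, rfl⟩ := Sym2.mem_iff_exists.1 hbe
  obtain ⟨c, rfl⟩ := Sym2.mem_iff_exists.1 hbf
  obtain ⟨g₃, g₄, g₅, -, -, -, hrest⟩ :=
    card_eq_three.1 (show #(s.erase s(b, c)) = 3 by rw [card_erase_of_mem hf, hcard])
  obtain ⟨x₃, y₃, rfl⟩ := Sym2.exists.1 ⟨g₃, rfl⟩
  obtain ⟨x₄, y₄, rfl⟩ := Sym2.exists.1 ⟨g₄, rfl⟩
  obtain ⟨x₅, y₅, rfl⟩ := Sym2.exists.1 ⟨g₅, rfl⟩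
  have himage : edgesP₂Plus3K₂.image (Sym2.map ![a, b, c, x₃, y₃, x₄, y₄, x₅, y₅]) =
      insert s(b, a) s := by
    rw [← insert_erase hf, hrest, Sym2.eq_swap]
    simp [edgesP₂Plus3K₂]
  refine ⟨_, injective_of_le_card_edgeSupport (p := edgesP₂Plus3K₂) ?_, himage⟩
  -- the nine labels are the eight vertices of `s` and the free end `a` of the path
  have ha : a ∉ edgeSupport s := by
    simp only [edgeSupport, mem_biUnion, Sym2.mem_toFinset, not_exists, not_and]
    intro g hg hag
    obtain rfl := honly g hg (not_disjoint_iff.2 ⟨a, by simp, Sym2.mem_toFinset.2 hag⟩)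
    rcases Sym2.mem_iff.1 hag with rfl | rfl
    · exact hloop _ (mem_insert_self _ _) (Sym2.mk_isDiag_iff.2 rfl)
    · exact hef rfl
  rw [himage, edgeSupport_insert]
  calc 9 = #(insert a (edgeSupport s)) := by
        rw [card_insert_of_notMem ha,
          card_edgeSupport hs fun x hx => hloop x (mem_insert_of_mem hx), hcard]
    _ ≤ _ := card_le_card (insert_subset (by simp) subset_union_right)

lemma realizes_edgesP₃Plus2K₂ (hloop : ∀ x ∈ s, ¬x.IsDiag) (hs : IsEdgeMatching s)
    (hcard : #s = 4) (hf : f ∈ s) (hg : g ∈ s) (hfg : f ≠ g)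
    (hef : ¬Disjoint e.toFinset f.toFinset) (heg : ¬Disjoint e.toFinset g.toFinset) :
    Realizes edgesP₃Plus2K₂ (insert e s) := by
  obtain ⟨u, hue, huf⟩ := not_disjoint_iff.1 hef
  obtain ⟨w, hwe, hwg⟩ := not_disjoint_iff.1 heg
  rw [Sym2.mem_toFinset] at hue huf hwe hwg
  have huw : u ≠ w := by
    rintro rfl
    exact not_disjoint_iff.2 ⟨u, Sym2.mem_toFinset.2 huf, Sym2.mem_toFinset.2 hwg⟩ (hs hf hg hfg)
  obtain rfl := (Sym2.mem_and_mem_iff huw).1 ⟨hue, hwe⟩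
  obtain ⟨a, rfl⟩ := Sym2.mem_iff_exists.1 huf
  obtain ⟨d, rfl⟩ := Sym2.mem_iff_exists.1 hwg
  have hg' : s(w, d) ∈ s.erase s(u, a) := mem_erase.2 ⟨hfg.symm, hg⟩
  obtain ⟨g₄, g₅, -, hrest⟩ := card_eq_two.1
    (show #((s.erase s(u, a)).erase s(w, d)) = 2 by
      rw [card_erase_of_mem hg', card_erase_of_mem hf, hcard])
  obtain ⟨x₄, y₄, rfl⟩ := Sym2.exists.1 ⟨g₄, rfl⟩
  obtain ⟨x₅, y₅, rfl⟩ := Sym2.exists.1 ⟨g₅, rfl⟩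
  have himage : edgesP₃Plus2K₂.image (Sym2.map ![a, u, w, d, x₄, y₄, x₅, y₅]) =
      insert s(u, w) s := by
    rw [← insert_erase hf, ← insert_erase hg', hrest, Sym2.eq_swap (a := u) (b := a)]
    simp [edgesP₃Plus2K₂, insert_comm s(a, u)]
  refine ⟨_, injective_of_le_card_edgeSupport (p := edgesP₃Plus2K₂) ?_, himage⟩
  rw [himage, edgeSupport_insert]
  calc 8 = #(edgeSupport s) := by rw [card_edgeSupport hs hloop, hcard]
    _ ≤ _ := card_le_card subset_union_right

lemma realizes_of_mem_attachments {t : Finset (Sym2 V)} (hloop : ∀ x ∈ t, ¬x.IsDiag)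
    (ht : #t = 5) (hef : (e, f) ∈ attachments t) :
    Realizes edgesP₂Plus3K₂ t ∨ Realizes edgesP₃Plus2K₂ t := by
  rw [attachments, mem_filter, mem_product] at hef
  obtain ⟨⟨he, hf⟩, hne, hmeet, hs⟩ := hef
  have hf' : f ∈ t.erase e := mem_erase.2 ⟨hne.symm, hf⟩
  have hcard : #(t.erase e) = 4 := by rw [card_erase_of_mem he, ht]
  rw [← insert_erase he] at hloop ⊢
  by_cases h : ∃ g ∈ t.erase e, g ≠ f ∧ ¬Disjoint e.toFinset g.toFinset
  · obtain ⟨g, hg, hgf, heg⟩ := h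
    exact Or.inr (realizes_edgesP₃Plus2K₂ (fun x hx => hloop x (mem_insert_of_mem hx)) hs hcard
      hf' hg hgf.symm hmeet heg)
  · push Not at h
    refine Or.inl (realizes_edgesP₂Plus3K₂ hloop hs hcard hf' hne hmeet fun g hg hmeet' => ?_)
    by_contra hgf
    exact hmeet' (h g hg hgf)

end Shapes

section DoubleCounting

variable {V : Type*} [Fintype V] [DecidableEq V] (G : SimpleGraph V) [DecidableRel G.Adj]

def matchingFinset (k : ℕ) : Finset (Finset (Sym2 V)) :=
  (G.edgeFinset.powersetCard k).filter IsEdgeMatching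

open Classical in
noncomputable def copyFinset {n : ℕ} (p : Finset (Sym2 (Fin n))) : Finset (Finset (Sym2 V)) :=
  G.edgeFinset.powerset.filter (Realizes p)

def matchingExtensions (k : ℕ) : Finset ((Finset (Sym2 V) × Sym2 V) × Sym2 V) :=
  ((matchingFinset G k ×ˢ G.edgeFinset) ×ˢ G.edgeFinset).filter fun x =>
    x.1.2 ∈ x.1.1 ∧ x.2 ≠ x.1.2 ∧ ¬Disjoint x.2.toFinset x.1.2.toFinset

variable {G}

lemma mem_matchingFinset {k : ℕ} {s : Finset (Sym2 V)} :
    s ∈ matchingFinset G k ↔ s ⊆ G.edgeFinset ∧ #s = k ∧ IsEdgeMatching s := by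
  rw [matchingFinset, mem_filter, mem_powersetCard, and_assoc]

lemma mem_copyFinset {n : ℕ} {p : Finset (Sym2 (Fin n))} {t : Finset (Sym2 V)} :
    t ∈ copyFinset G p ↔ t ⊆ G.edgeFinset ∧ Realizes p t := by
  simp only [copyFinset, mem_filter, mem_powerset]

lemma mem_matchingExtensions {k : ℕ} {s : Finset (Sym2 V)} {f e : Sym2 V} :
    ((s, f), e) ∈ matchingExtensions G k ↔ s ∈ matchingFinset G k ∧ e ∈ G.edgeFinset ∧
      f ∈ s ∧ e ≠ f ∧ ¬Disjoint e.toFinset f.toFinset := by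
  rw [matchingExtensions, mem_filter, mem_product, mem_product]
  constructor
  · rintro ⟨⟨⟨hs, -⟩, he⟩, hfs, hef, hmeet⟩
    exact ⟨hs, he, hfs, hef, hmeet⟩
  · rintro ⟨hs, he, hfs, hef, hmeet⟩
    exact ⟨⟨⟨hs, (mem_matchingFinset.1 hs).1 hfs⟩, he⟩, hfs, hef, hmeet⟩

lemma card_edges_meeting {d : ℕ} (hreg : G.IsRegularOfDegree d) {f : Sym2 V}
    (hf : f ∈ G.edgeFinset) :
    #(G.edgeFinset.filter fun e => e ≠ f ∧ ¬Disjoint e.toFinset f.toFinset) = 2 * (d - 1) := by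
  induction f using Sym2.ind with | _ u v => ?_
  have huv : G.Adj u v := G.mem_edgeFinset.1 hf
  have hfilter :
      G.edgeFinset.filter (fun e => e ≠ s(u, v) ∧ ¬Disjoint e.toFinset s(u, v).toFinset) =
        (G.incidenceFinset u ∪ G.incidenceFinset v).erase s(u, v) := by
    ext e
    simp only [mem_filter, mem_erase, mem_union, mem_incidenceFinset, incidenceSet,
      Set.mem_ofPred_eq, mem_edgeFinset, Sym2.toFinset_mk_eq, disjoint_insert_right,
      disjoint_singleton_right, Sym2.mem_toFinset, not_and_or, not_not]
    tauto
  have hinter : G.incidenceFinset u ∩ G.incidenceFinset v = {s(u, v)} := by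
    apply coe_injective
    simpa using G.incidenceSet_inter_incidenceSet_of_adj huv
  have hunion := card_union_add_card_inter (G.incidenceFinset u) (G.incidenceFinset v)
  rw [hinter, card_singleton, card_incidenceFinset_eq_degree, card_incidenceFinset_eq_degree,
    hreg u, hreg v] at hunion
  rw [hfilter, card_erase_of_mem (mem_union_left _ ((G.mem_incidenceFinset _ _).2
    ⟨huv, Sym2.mem_mk_left u v⟩))]
  omega

lemma card_matchingExtensions {d : ℕ} (hreg : G.IsRegularOfDegree d) (k : ℕ) :
    #(matchingExtensions G k) = k * (2 * (d - 1)) * #(matchingFinset G k) := by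
  have hfiber : ∀ s ∈ matchingFinset G k, ∀ f ∈ G.edgeFinset,
      ∑ e ∈ G.edgeFinset, (if f ∈ s ∧ e ≠ f ∧ ¬Disjoint e.toFinset f.toFinset then 1 else 0) =
        if f ∈ s then 2 * (d - 1) else 0 := by
    intro s _ f hf
    split_ifs with hfs
    · simp only [hfs, true_and, ← card_filter, card_edges_meeting hreg hf]
    · simp [hfs]
  have hmatching : ∀ s ∈ matchingFinset G k,
      ∑ f ∈ G.edgeFinset, (if f ∈ s then 2 * (d - 1) else 0) = k * (2 * (d - 1)) := by
    intro s hs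
    obtain ⟨hsub, hcard, -⟩ := mem_matchingFinset.1 hs
    rw [← sum_filter, filter_mem_eq_inter, inter_eq_right.2 hsub, sum_const, hcard, smul_eq_mul]
  rw [matchingExtensions, card_filter, sum_product, sum_product,
    sum_congr rfl fun s hs => (sum_congr rfl (hfiber s hs)).trans (hmatching s hs), sum_const,
    smul_eq_mul, mul_comm]

lemma notMem_of_mem_matchingExtensions {k : ℕ} {s : Finset (Sym2 V)} {f e : Sym2 V}
    (hx : ((s, f), e) ∈ matchingExtensions G k) : e ∉ s := by
  obtain ⟨hs, -, hfs, hef, hmeet⟩ := mem_matchingExtensions.1 hx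
  exact (mem_matchingFinset.1 hs).2.2.notMem_of_not_disjoint hfs hef hmeet

lemma card_fiber_matchingExtensions {k : ℕ} {t : Finset (Sym2 V)}
    (ht : t ∈ G.edgeFinset.powersetCard (k + 1)) :
    #((matchingExtensions G k).filter fun x => insert x.2 x.1.1 = t) = #(attachments t) := by
  obtain ⟨hsub, hcard⟩ := mem_powersetCard.1 ht
  refine card_nbij' (fun x => (x.2, x.1.2)) (fun ef => ((t.erase ef.1, ef.2), ef.1))
    ?_ ?_ ?_ fun _ _ => rfl
  · rintro ⟨⟨s, f⟩, e⟩ hx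
    rw [mem_coe, mem_filter] at hx
    obtain ⟨hx, rfl⟩ := hx
    obtain ⟨hs, -, hfs, hef, hmeet⟩ := mem_matchingExtensions.1 hx
    rw [mem_coe, attachments, mem_filter, erase_insert (notMem_of_mem_matchingExtensions hx),
      mem_product]
    exact ⟨⟨mem_insert_self _ _, mem_insert_of_mem hfs⟩, hef, hmeet,
      (mem_matchingFinset.1 hs).2.2⟩
  · rintro ⟨e, f⟩ hef
    rw [mem_coe, attachments, mem_filter, mem_product] at hef
    obtain ⟨⟨he, hf⟩, hne, hmeet, hs⟩ := hef
    have hs' : t.erase e ∈ matchingFinset G k := mem_matchingFinset.2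
      ⟨(erase_subset _ _).trans hsub, by rw [card_erase_of_mem he, hcard, Nat.add_sub_cancel], hs⟩
    exact mem_filter.2 ⟨mem_matchingExtensions.2 ⟨hs', hsub he, mem_erase.2 ⟨hne.symm, hf⟩, hne,
      hmeet⟩, insert_erase he⟩
  · rintro ⟨⟨s, f⟩, e⟩ hx
    rw [mem_coe, mem_filter] at hx
    obtain ⟨hx, rfl⟩ := hx
    dsimp only
    rw [erase_insert (notMem_of_mem_matchingExtensions hx)]

lemma card_matchingExtensions_eq_sum_card_attachments (k : ℕ) :
    #(matchingExtensions G k) =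
      ∑ t ∈ G.edgeFinset.powersetCard (k + 1), #(attachments t) := by
  have hmaps : Set.MapsTo (fun x : (Finset (Sym2 V) × Sym2 V) × Sym2 V => insert x.2 x.1.1)
      ↑(matchingExtensions G k) ↑(G.edgeFinset.powersetCard (k + 1)) := by
    rintro ⟨⟨s, f⟩, e⟩ hx
    obtain ⟨hs, he, -⟩ := mem_matchingExtensions.1 hx
    obtain ⟨hsub, hcard, -⟩ := mem_matchingFinset.1 hs
    refine mem_powersetCard.2 ⟨insert_subset he hsub, ?_⟩
    rw [card_insert_of_notMem (notMem_of_mem_matchingExtensions hx), hcard]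
  rw [card_eq_sum_card_fiberwise hmaps]
  exact sum_congr rfl fun t ht => card_fiber_matchingExtensions ht

lemma sum_card_attachments_powersetCard_five :
    ∑ t ∈ G.edgeFinset.powersetCard 5, #(attachments t) =
      2 * #(copyFinset G edgesP₂Plus3K₂) + 2 * #(copyFinset G edgesP₃Plus2K₂) := by
  have hsub : ∀ {n} {p : Finset (Sym2 (Fin n))}, #p = 5 →
      copyFinset G p ⊆ G.edgeFinset.powersetCard 5 := fun hp t ht =>
    mem_powersetCard.2 ⟨(mem_copyFinset.1 ht).1, ((mem_copyFinset.1 ht).2.card_eq).trans hp⟩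
  have hdisj : Disjoint (copyFinset G edgesP₂Plus3K₂) (copyFinset G edgesP₃Plus2K₂) := by
    refine disjoint_left.2 fun t hB hC => ?_
    have h9 := (mem_copyFinset.1 hB).2.card_edgeSupport_eq
    have h8 := (mem_copyFinset.1 hC).2.card_edgeSupport_eq
    rw [edgeSupport_edgesP₂Plus3K₂, card_univ, Fintype.card_fin] at h9
    rw [edgeSupport_edgesP₃Plus2K₂, card_univ, Fintype.card_fin] at h8
    omega
  have hzero : ∀ t ∈ G.edgeFinset.powersetCard 5,
      t ∉ copyFinset G edgesP₂Plus3K₂ ∪ copyFinset G edgesP₃Plus2K₂ → #(attachments t) = 0 := by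
    intro t ht hBC
    obtain ⟨hsub, hcard⟩ := mem_powersetCard.1 ht
    refine card_eq_zero.2 (eq_empty_of_forall_notMem fun ⟨e, f⟩ hef => hBC ?_)
    have hloop : ∀ x ∈ t, ¬x.IsDiag := fun x hx =>
      G.not_isDiag_of_mem_edgeSet (mem_edgeFinset.1 (hsub hx))
    rcases realizes_of_mem_attachments hloop hcard hef with h | h
    · exact mem_union_left _ (mem_copyFinset.2 ⟨hsub, h⟩)
    · exact mem_union_right _ (mem_copyFinset.2 ⟨hsub, h⟩)
  rw [← sum_subset (union_subset (hsub (by decide)) (hsub (by decide))) hzero, sum_union hdisj,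
    sum_congr rfl fun t ht => (mem_copyFinset.1 ht).2.card_attachments_eq,
    sum_congr rfl fun t ht => (mem_copyFinset.1 ht).2.card_attachments_eq,
    card_attachments_edgesP₂Plus3K₂, card_attachments_edgesP₃Plus2K₂, sum_const, sum_const,
    smul_eq_mul, smul_eq_mul, mul_comm 2, mul_comm 2]

end DoubleCounting

section Subgraphs

variable {V : Type*} (G : SimpleGraph V)

def ofEdges (s : Set (Sym2 V)) : G.Subgraph where
  verts := {v | ∃ e ∈ s ∩ G.edgeSet, v ∈ e}
  Adj x y := s(x, y) ∈ s ∩ G.edgeSet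
  adj_sub h := h.2
  edge_vert h := ⟨_, h, Sym2.mem_mk_left _ _⟩
  symm := ⟨fun _ _ h => by rwa [Sym2.eq_swap]⟩

variable {G} {s : Set (Sym2 V)}

lemma ofEdges_adj {x y : V} : (ofEdges G s).Adj x y ↔ s(x, y) ∈ s ∩ G.edgeSet := Iff.rfl

lemma mem_verts_ofEdges {v : V} : v ∈ (ofEdges G s).verts ↔ ∃ e ∈ s ∩ G.edgeSet, v ∈ e := Iff.rfl

lemma ofEdges_adj_iff (hs : s ⊆ G.edgeSet) {x y : V} : (ofEdges G s).Adj x y ↔ s(x, y) ∈ s :=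
  ofEdges_adj.trans ⟨And.left, fun h => ⟨h, hs h⟩⟩

lemma edgeSet_ofEdges (hs : s ⊆ G.edgeSet) : (ofEdges G s).edgeSet = s := by
  ext e
  induction e using Sym2.ind with
  | _ x y => exact ofEdges_adj_iff hs

lemma ofEdges_edgeSet {H : G.Subgraph} (hH : H.verts ⊆ H.support) : ofEdges G H.edgeSet = H := by
  refine Subgraph.ext (Set.Subset.antisymm ?_ fun v hv => ?_) ?_
  · rintro v hv
    obtain ⟨e, ⟨he, -⟩, hve⟩ := mem_verts_ofEdges.1 hv
    obtain ⟨w, rfl⟩ := Sym2.mem_iff_exists.1 hve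
    exact H.edge_vert he
  · obtain ⟨w, hvw⟩ := hH hv
    exact mem_verts_ofEdges.2 ⟨s(v, w), ⟨hvw, H.adj_sub hvw⟩, Sym2.mem_mk_left v w⟩
  · ext x y
    exact ofEdges_adj.trans ⟨fun h => h.1, fun h => ⟨h, H.adj_sub h⟩⟩

lemma verts_ofEdges [DecidableEq V] {t : Finset (Sym2 V)} (ht : ↑t ⊆ G.edgeSet) :
    (ofEdges G t).verts = ↑(edgeSupport t) := by
  ext v
  simp [mem_verts_ofEdges, edgeSupport, Set.inter_eq_left.2 ht]

lemma isMatching_ofEdges_iff [DecidableEq V] (hs : s ⊆ G.edgeSet) :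
    (ofEdges G s).IsMatching ↔ s.PairwiseDisjoint Sym2.toFinset := by
  constructor
  · intro hM e he f hf hef
    refine disjoint_left.2 fun v hve hvf => hef ?_
    rw [Sym2.mem_toFinset] at hve hvf
    obtain ⟨x, rfl⟩ := Sym2.mem_iff_exists.1 hve
    obtain ⟨y, rfl⟩ := Sym2.mem_iff_exists.1 hvf
    have hx := (ofEdges_adj_iff hs).2 he
    obtain ⟨w, -, hw⟩ := hM ((ofEdges G s).edge_vert hx)
    rw [hw x hx, hw y ((ofEdges_adj_iff hs).2 hf)]
  · intro hd v hv
    obtain ⟨e, ⟨he, -⟩, hve⟩ := mem_verts_ofEdges.1 hv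
    obtain ⟨w, rfl⟩ := Sym2.mem_iff_exists.1 hve
    refine ⟨w, (ofEdges_adj_iff hs).2 he, fun y hy => (Sym2.congr_right (a := v)).1 ?_⟩
    by_contra hne
    exact disjoint_left.1 (hd ((ofEdges_adj_iff hs).1 hy) he hne)
      (Sym2.mem_toFinset.2 (Sym2.mem_mk_left v y)) (Sym2.mem_toFinset.2 (Sym2.mem_mk_left v w))

lemma nonempty_coe_iso_iff {I : Type*} (X : SimpleGraph I) (H : G.Subgraph) :
    Nonempty (H.coe ≃g X) ↔ ∃ φ : I → V, Function.Injective φ ∧ Set.range φ = H.verts ∧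
      ∀ i j, H.Adj (φ i) (φ j) ↔ X.Adj i j := by
  constructor
  · rintro ⟨σ⟩
    refine ⟨fun i => σ.symm i, Subtype.val_injective.comp σ.symm.injective, ?_,
      fun i j => σ.symm.map_adj_iff⟩
    rw [Set.range_comp' Subtype.val, σ.symm.surjective.range_eq, Set.image_univ,
      Subtype.range_coe]
  · rintro ⟨φ, hφ, hrange, hadj⟩
    let σ : H.verts ≃ I := ((Equiv.ofInjective φ hφ).trans (Equiv.setCongr hrange)).symm
    have hσ : ∀ a : H.verts, φ (σ a) = a := fun a => congrArg Subtype.val (σ.symm_apply_apply a)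
    exact ⟨⟨σ, fun {a b} => by rw [← hadj, hσ, hσ]; rfl⟩⟩

lemma verts_subset_support_of_iso {I : Type*} {X : SimpleGraph I} (hX : ∀ i, ∃ j, X.Adj i j)
    {H : G.Subgraph} (σ : H.coe ≃g X) : H.verts ⊆ H.support := fun v hv => by
  obtain ⟨j, hj⟩ := hX (σ ⟨v, hv⟩)
  exact ⟨σ.symm j, by simpa using σ.symm.map_adj_iff.2 hj⟩

lemma nonempty_iso_ofEdges_iff [DecidableEq V] {I : Type*} {X : SimpleGraph I} {n : ℕ}
    {p : Finset (Sym2 (Fin n))} (ψ : Fin n ≃ I) (hX : ∀ i j, X.Adj (ψ i) (ψ j) ↔ s(i, j) ∈ p)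
    (hp : edgeSupport p = univ) {t : Finset (Sym2 V)} (ht : ↑t ⊆ G.edgeSet) :
    Nonempty ((ofEdges G t).coe ≃g X) ↔ Realizes p t := by
  rw [nonempty_coe_iso_iff]
  constructor
  · rintro ⟨φ, hφ, hrange, hadj⟩
    refine ⟨φ ∘ ψ, hφ.comp ψ.injective, Subset.antisymm (fun e he => ?_) fun e he => ?_⟩
    · obtain ⟨z, hz, rfl⟩ := mem_image.1 he
      induction z using Sym2.ind with
      | _ i j => exact (ofEdges_adj_iff ht).1 ((hadj _ _).2 ((hX i j).2 hz))
    · induction e using Sym2.ind with | _ x y => ?_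
      have hxy := (ofEdges_adj_iff ht).2 he
      obtain ⟨a, rfl⟩ : x ∈ Set.range φ := hrange ▸ (ofEdges G t).edge_vert hxy
      obtain ⟨b, rfl⟩ : y ∈ Set.range φ := hrange ▸ (ofEdges G t).edge_vert hxy.symm
      refine mem_image.2 ⟨s(ψ.symm a, ψ.symm b), (hX _ _).1 ?_, by simp⟩
      simpa using (hadj a b).1 hxy
  · rintro ⟨F, hF, rfl⟩
    refine ⟨F ∘ ψ.symm, hF.comp ψ.symm.injective, ?_, fun i j => ?_⟩
    · rw [verts_ofEdges ht, edgeSupport_image, hp, coe_image, coe_univ, Set.image_univ,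
        Set.range_comp, ψ.symm.surjective.range_eq, Set.image_univ]
    · rw [ofEdges_adj_iff ht, Function.comp_apply, Function.comp_apply, ← Sym2.map_mk, mem_coe,
        (Sym2.map.injective hF).mem_finset_image, ← hX, ψ.apply_symm_apply, ψ.apply_symm_apply]

variable [Fintype V] [DecidableRel G.Adj]

lemma ncard_setOf_subgraph_eq_card {P : G.Subgraph → Prop}
    (hP : ∀ H, P H → H.verts ⊆ H.support) (T : Finset (Finset (Sym2 V)))
    (hT : ∀ t, t ∈ T ↔ t ⊆ G.edgeFinset ∧ P (ofEdges G t)) :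
    {H | P H}.ncard = #T := by
  have hsub : ∀ t ∈ T, (t : Set (Sym2 V)) ⊆ G.edgeSet := fun t ht => by
    rw [← coe_edgeFinset, coe_subset]
    exact ((hT t).1 ht).1
  have hinj : Set.InjOn (fun t : Finset (Sym2 V) => ofEdges G t) T := fun t₁ h₁ t₂ h₂ h => by
    have := congrArg Subgraph.edgeSet h
    rwa [edgeSet_ofEdges (hsub t₁ h₁), edgeSet_ofEdges (hsub t₂ h₂), coe_inj] at this
  have himage : (fun t : Finset (Sym2 V) => ofEdges G t) '' T = {H | P H} := by
    ext H
    refine ⟨fun ⟨t, ht, hH⟩ => hH ▸ ((hT t).1 ht).2, fun hH => ?_⟩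
    have hfin := H.edgeSet.toFinite
    have hH' : ofEdges G ↑hfin.toFinset = H := by
      rw [Set.Finite.coe_toFinset, ofEdges_edgeSet (hP H hH)]
    refine ⟨hfin.toFinset, (hT _).2 ⟨?_, hH'.symm ▸ hH⟩, hH'⟩
    rw [← coe_subset, coe_edgeFinset, Set.Finite.coe_toFinset]
    exact H.edgeSet_subset
  rw [← himage, hinj.ncard_image, Set.ncard_coe_finset]

lemma numMatchings_eq_card [DecidableEq V] (k : ℕ) : numMatchings G k = #(matchingFinset G k) := by
  refine ncard_setOf_subgraph_eq_card (fun H hH => hH.1.support_eq_verts.ge) _ fun t => ?_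
  rw [mem_matchingFinset, and_congr_right_iff]
  intro ht
  rw [← coe_subset, coe_edgeFinset] at ht
  rw [isMatching_ofEdges_iff ht, edgeSet_ofEdges ht, Set.ncard_coe_finset, and_comm]
  rfl

lemma numSubgraphs_eq_card [DecidableEq V] {I : Type*} (X : SimpleGraph I) {n : ℕ}
    {p : Finset (Sym2 (Fin n))} (ψ : Fin n ≃ I) (hX : ∀ i j, X.Adj (ψ i) (ψ j) ↔ s(i, j) ∈ p)
    (hp : edgeSupport p = univ) :
    numSubgraphs G X = #(copyFinset G p) := by
  have hXsupp : ∀ i, ∃ j, X.Adj i j := by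
    intro i
    obtain ⟨z, hz, hiz⟩ := mem_biUnion.1 (hp ▸ mem_univ (ψ.symm i) : ψ.symm i ∈ edgeSupport p)
    obtain ⟨j, rfl⟩ := Sym2.mem_iff_exists.1 (Sym2.mem_toFinset.1 hiz)
    exact ⟨ψ j, by simpa using (hX _ _).2 hz⟩
  refine ncard_setOf_subgraph_eq_card (fun H ⟨σ⟩ => verts_subset_support_of_iso hXsupp σ) _
    fun t => ?_
  rw [mem_copyFinset, and_congr_right_iff]
  intro ht
  rw [← coe_subset, coe_edgeFinset] at ht
  exact (nonempty_iso_ofEdges_iff ψ hX hp ht).symm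

end Subgraphs

instance {n : ℕ} : DecidableRel (pathGraph n).Adj :=
  fun _ _ => decidable_of_iff _ pathGraph_adj.symm

instance {α β : Type*} {G : SimpleGraph α} {H : SimpleGraph β} [DecidableRel G.Adj]
    [DecidableRel H.Adj] : DecidableRel (G ⊕g H).Adj
  | .inl a, .inl b => decidable_of_iff (G.Adj a b) (by simp)
  | .inl _, .inr _ => isFalse (by simp)
  | .inr _, .inl _ => isFalse (by simp)
  | .inr a, .inr b => decidable_of_iff (H.Adj a b) (by simp)

def finEquivP₂Plus3K₂ : Fin 9 ≃ ((Fin 3 ⊕ Fin 2) ⊕ Fin 2) ⊕ Fin 2 :=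
  ((((finSumFinEquiv (m := 3) (n := 2)).sumCongr (Equiv.refl (Fin 2))).trans
    finSumFinEquiv).sumCongr (Equiv.refl (Fin 2)) |>.trans finSumFinEquiv).symm

def finEquivP₃Plus2K₂ : Fin 8 ≃ (Fin 4 ⊕ Fin 2) ⊕ Fin 2 :=
  (((finSumFinEquiv (m := 4) (n := 2)).sumCongr (Equiv.refl (Fin 2))).trans
    finSumFinEquiv).symm

lemma adj_finEquivP₂Plus3K₂ (i j : Fin 9) :
    (pathGraph 3 ⊕g pathGraph 2 ⊕g pathGraph 2 ⊕g pathGraph 2).Adj (finEquivP₂Plus3K₂ i)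
      (finEquivP₂Plus3K₂ j) ↔ s(i, j) ∈ edgesP₂Plus3K₂ := by
  revert i j; decide

lemma adj_finEquivP₃Plus2K₂ (i j : Fin 8) :
    (pathGraph 4 ⊕g pathGraph 2 ⊕g pathGraph 2).Adj (finEquivP₃Plus2K₂ i)
      (finEquivP₃Plus2K₂ j) ↔ s(i, j) ∈ edgesP₃Plus2K₂ := by
  revert i j; decide

theorem stmt_5_general {V : Type*} [Fintype V] [DecidableEq V] (G : SimpleGraph V) [DecidableRel G.Adj]
    (hreg : G.IsRegularOfDegree 3) :
    16 * numMatchings G 4 = 2 * numSubgraphs G (pathGraph 3 ⊕g pathGraph 2 ⊕g pathGraph 2 ⊕g pathGraph 2) + 2 * numSubgraphs G (pathGraph 4 ⊕g pathGraph 2 ⊕g pathGraph 2) := by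
  rw [numMatchings_eq_card,
    numSubgraphs_eq_card _ _ adj_finEquivP₂Plus3K₂ edgeSupport_edgesP₂Plus3K₂,
    numSubgraphs_eq_card _ _ adj_finEquivP₃Plus2K₂ edgeSupport_edgesP₃Plus2K₂,
    ← sum_card_attachments_powersetCard_five, ← card_matchingExtensions_eq_sum_card_attachments,
    card_matchingExtensions hreg]

theorem stmt_5 {V : Type*} [Fintype V] [DecidableEq V] (G : SimpleGraph V) [DecidableRel G.Adj]
    (hreg : G.IsRegularOfDegree 3) (hbip : G.Colorable 2) :
    16 * numMatchings G 4 = 2 * numSubgraphs G (pathGraph 3 ⊕g pathGraph 2 ⊕g pathGraph 2 ⊕g pathGraph 2) + 2 * numSubgraphs G (pathGraph 4 ⊕g pathGraph 2 ⊕g pathGraph 2) :=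
  stmt_5_general G hreg
end

section
/- Let G be a finite simple 3-regular bipartite graph. Then 8·M(G,2) = N(P₃+K₂) + 4·N(C₄) + 2·N(P₄). -/
/-!
Count labelled copies (injective homomorphisms) `L(X)` instead of subgraphs: every subgraph
isomorphic to `X` is the image of exactly `|Aut X|` labelled copies of `X`.

Fix a vertex `i` of degree `d` in a pattern `X`. Each labelled copy `f` of `X` in an `r`-regular
graph extends in `r - d` ways by an edge `f i z` not already used by the copy. Either `z = f j`
for a non-neighbour `j ≠ i` of `i`, and then `f` is a copy of `X + ij`, or `z` is a new vertex and
we get a copy of `X` with a pendant edge at `i`. For `r = 3` and leaves of `2K₂`, `P₂ + K₂`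
and `P₃` this gives
  `2 L(2K₂) = 2 L(P₃) + L(P₂ + K₂)`,
  `2 L(P₂ + K₂) = 2 L(P₄) + L(P₃ + K₂)`,
  `2 L(P₃) = L(C₄) + L(P₄)`,
where the chords closing a triangle contribute nothing because `G` is bipartite. Dividing by the
automorphism counts `8, 8, 2, 4` of `2K₂, C₄, P₄, P₃ + K₂` gives the identity.
-/

open SimpleGraph

open Finset Function

namespace SimpleGraph

variable {V W W' : Type*}

instance (n : ℕ) : DecidableRel (pathGraph n).Adj := fun _ _ => decidable_of_iff' _ pathGraph_adj

instance [DecidableEq V] (s t : V) : DecidableRel (edge s t).Adj :=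
  fun _ _ => decidable_of_iff' _ (edge_adj ..)

instance (A : SimpleGraph W) (B : SimpleGraph W') [DecidableRel A.Adj] [DecidableRel B.Adj] :
    DecidableRel (A ⊕g B).Adj
  | .inl u, .inl v => decidable_of_iff' (A.Adj u v) Iff.rfl
  | .inl _, .inr _ => isFalse (by simp)
  | .inr _, .inl _ => isFalse (by simp)
  | .inr u, .inr v => decidable_of_iff' (B.Adj u v) Iff.rfl

def addPendant (X : SimpleGraph W) (i : W) : SimpleGraph (Option W) where
  Adj
    | some a, some b => X.Adj a b
    | some a, none => a = i
    | none, some b => b = i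
    | none, none => False
  symm := ⟨by rintro (_ | a) (_ | b) h <;> first | exact h | exact X.symm.symm _ _ h⟩
  loopless := ⟨by rintro (_ | a) h; exacts [h, X.loopless.irrefl a h]⟩

instance (X : SimpleGraph W) [DecidableRel X.Adj] [DecidableEq W] (i : W) :
    DecidableRel (X.addPendant i).Adj
  | some a, some b => decidable_of_iff' (X.Adj a b) Iff.rfl
  | some a, none => decidable_of_iff' (a = i) Iff.rfl
  | none, some b => decidable_of_iff' (b = i) Iff.rfl
  | none, none => isFalse id

lemma not_colorable_two_of_adj_of_adj_of_adj {X : SimpleGraph W} {a b c : W} (hab : X.Adj a b)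
    (hbc : X.Adj b c) (hca : X.Adj c a) : ¬X.Colorable 2 := by
  rintro ⟨C⟩
  have key : ∀ x y z : Fin 2, x ≠ y → y ≠ z → z ≠ x → False := by decide
  exact key _ _ _ (C.valid hab) (C.valid hbc) (C.valid hca)

lemma natCard_iso_congr_right {U : Type*} {X : SimpleGraph W} {Y : SimpleGraph W'}
    {Z : SimpleGraph U} (e : Y ≃g Z) : Nat.card (X ≃g Y) = Nat.card (X ≃g Z) :=
  Nat.card_congr ⟨fun f => f.trans e, fun f => f.trans e.symm, fun f => by ext; simp,
    fun f => by ext; simp⟩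

lemma natCard_iso_self_eq_card [Fintype W] [DecidableEq W] (X : SimpleGraph W)
    [DecidableRel X.Adj] :
    Nat.card (X ≃g X) = #{σ : Equiv.Perm W | ∀ a b, X.Adj (σ a) (σ b) ↔ X.Adj a b} := by
  rw [← Fintype.card_subtype, ← Nat.card_eq_fintype_card]
  exact Nat.card_congr
    { toFun e := ⟨e.toEquiv, fun _ _ => e.map_adj_iff⟩
      invFun σ := ⟨σ.1, σ.2 _ _⟩
      left_inv _ := rfl
      right_inv _ := rfl }

section Copies

variable {G : SimpleGraph V} {X : SimpleGraph W}

lemma Copy.toSubgraph_coeCopy_comp (S : G.Subgraph) (e : X ≃g S.coe) :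
    (S.coeCopy.comp e.toCopy).toSubgraph = S := by
  simp [Copy.toSubgraph, Subgraph.coeCopy, Copy.comp, Subgraph.map_comp]

lemma Copy.bijective_coeCopy_comp (S : G.Subgraph) :
    Bijective fun e : X ≃g S.coe =>
      (⟨S.coeCopy.comp e.toCopy, Copy.toSubgraph_coeCopy_comp S e⟩ :
        {f : Copy X G // f.toSubgraph = S}) := by
  refine ⟨fun e₁ e₂ h => RelIso.ext fun x => Subtype.val_injective ?_, ?_⟩
  · exact congrArg (fun f : {f : Copy X G // f.toSubgraph = S} => f.1 x) h
  · rintro ⟨f, rfl⟩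
    exact ⟨f.isoToSubgraph, rfl⟩

variable [Fintype V]

lemma numSubgraphs_eq_copyCount : numSubgraphs G X = G.copyCount X := by
  classical
  rw [numSubgraphs, copyCount, ← Set.ncard_coe_finset]
  congr 1
  ext H
  simp only [Finset.coe_filter, Finset.mem_univ, true_and, Set.mem_ofPred_eq]
  exact ⟨fun ⟨e⟩ => ⟨e.symm⟩, fun ⟨e⟩ => ⟨e.symm⟩⟩

variable [Fintype W]

lemma labelledCopyCount_eq_natCard : G.labelledCopyCount X = Nat.card (Copy X G) := by
  classical
  rw [labelledCopyCount, Nat.card_eq_fintype_card]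

lemma labelledCopyCount_congr [Fintype W'] {Y : SimpleGraph W'} (e : X ≃g Y) :
    G.labelledCopyCount X = G.labelledCopyCount Y := by
  simp only [labelledCopyCount_eq_natCard]
  exact Nat.card_congr
    { toFun f := f.comp e.symm.toCopy
      invFun f := f.comp e.toCopy
      left_inv f := by ext; simp [Copy.comp_apply]
      right_inv f := by ext; simp [Copy.comp_apply] }

lemma labelledCopyCount_congr_of_bijective [Fintype W'] {Y : SimpleGraph W'} (e : W → W')
    (he : Bijective e) (hadj : ∀ a b, Y.Adj (e a) (e b) ↔ X.Adj a b) :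
    G.labelledCopyCount X = G.labelledCopyCount Y :=
  labelledCopyCount_congr ⟨.ofBijective e he, hadj _ _⟩

lemma labelledCopyCount_eq_zero_of_colorable {n : ℕ} (hG : G.Colorable n) (hX : ¬X.Colorable n) :
    G.labelledCopyCount X = 0 :=
  labelledCopyCount_eq_zero.2 fun ⟨f⟩ => hX (hG.of_hom f.toHom)

theorem labelledCopyCount_eq_natCard_iso_mul_copyCount :
    G.labelledCopyCount X = Nat.card (X ≃g X) * G.copyCount X := by
  classical
  have hfiber (S : G.Subgraph) : Nat.card {f : Copy X G // f.toSubgraph = S} =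
      Nat.card (X ≃g X) * if Nonempty (X ≃g S.coe) then 1 else 0 := by
    rw [← Nat.card_eq_of_bijective _ (Copy.bijective_coeCopy_comp S)]
    split_ifs with h
    · rw [mul_one, natCard_iso_congr_right h.some.symm]
    · simp_all
  rw [labelledCopyCount_eq_natCard, ← Nat.card_congr (Equiv.sigmaFiberEquiv Copy.toSubgraph),
    Nat.card_sigma, Finset.sum_congr rfl fun S _ => hfiber S, ← Finset.mul_sum, Finset.sum_boole,
    Nat.cast_id, copyCount]

end Copies

section Extension

variable {G : SimpleGraph V} {X : SimpleGraph W}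

lemma natCard_copy_sup_edge {i j : W} (hij : i ≠ j) :
    Nat.card (Copy (X ⊔ edge i j) G) = Nat.card {f : Copy X G // G.Adj (f i) (f j)} := by
  refine Nat.card_congr
    { toFun f := ⟨f.comp (.ofLE X _ le_sup_left), f.toHom.map_adj (by simp [edge_adj, hij])⟩
      invFun f := ⟨⟨f.1, fun {a b} h => ?_⟩, f.1.injective⟩
      left_inv f := rfl
      right_inv f := rfl }
  obtain h | h := h
  · exact f.1.toHom.map_adj h
  · obtain ⟨⟨rfl, rfl⟩ | ⟨rfl, rfl⟩, -⟩ := (edge_adj ..).1 h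
    exacts [f.2, f.2.symm]

lemma natCard_copy_addPendant (i : W) :
    Nat.card (Copy (X.addPendant i) G) =
      Nat.card (Σ f : Copy X G, {z : V // G.Adj (f i) z ∧ z ∉ Set.range f}) := by
  let ι : Copy X (X.addPendant i) := ⟨⟨some, id⟩, Option.some_injective _⟩
  refine Nat.card_congr
    { toFun g := ⟨g.comp ι, g none, g.toHom.map_adj rfl, ?_⟩
      invFun p := ⟨⟨fun o => o.elim p.2 p.1, ?_⟩, ?_⟩
      left_inv g := Copy.ext fun o => by cases o <;> rfl
      right_inv p := Sigma.subtype_ext rfl rfl }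
  · rintro ⟨a, ha⟩
    exact Option.some_ne_none a (g.injective ha)
  · rintro (_ | a) (_ | b) (h : (X.addPendant i).Adj _ _)
    · exact h.elim
    · obtain rfl := h
      exact p.2.2.1.symm
    · obtain rfl := h
      exact p.2.2.1
    · exact p.1.toHom.map_adj h
  · rintro (_ | a) (_ | b) h <;> simp only [RelHom.coeFn_mk, Option.elim] at h
    · rfl
    · exact (p.2.2.2 ⟨b, h.symm⟩).elim
    · exact (p.2.2.2 ⟨a, h⟩).elim
    · exact congrArg _ (p.1.injective h)

variable [Fintype V] [Fintype W] [DecidableEq W] [DecidableRel G.Adj] [DecidableRel X.Adj]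

lemma Copy.degree_eq_add [DecidableEq V] (f : Copy X G) (i : W) [Fintype (X.neighborSet i)] :
    G.degree (f i) = X.degree i + #{j | (j ≠ i ∧ ¬X.Adj i j) ∧ G.Adj (f i) (f j)} +
      #{z | G.Adj (f i) z ∧ z ∉ Set.range f} := by
  have hrange : #{z ∈ G.neighborFinset (f i) | z ∈ Set.range f} = #{j | G.Adj (f i) (f j)} := by
    rw [← card_map f.toEmbedding]
    congr 1
    ext z
    simp only [Finset.mem_filter, mem_neighborFinset, Finset.mem_map, Finset.mem_univ, true_and,
      Copy.toEmbedding, Function.Embedding.coeFn_mk, Set.mem_range]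
    constructor
    · rintro ⟨h, a, rfl⟩
      exact ⟨a, h, rfl⟩
    · rintro ⟨a, h, rfl⟩
      exact ⟨h, a, rfl⟩
  have hsplit : #{j | G.Adj (f i) (f j)} =
      X.degree i + #{j | (j ≠ i ∧ ¬X.Adj i j) ∧ G.Adj (f i) (f j)} := by
    rw [← card_neighborSet_eq_degree, Fintype.card_subtype,
      ← Finset.card_filter_add_card_filter_not (p := X.Adj i)]
    congr 2 <;> ext j <;>
      simp only [Finset.mem_filter, Finset.mem_univ, true_and, mem_neighborSet]
    · exact ⟨fun h => h.2, fun h => ⟨f.toHom.map_adj h, h⟩⟩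
    · exact ⟨fun ⟨h, hX⟩ => ⟨⟨fun hj => G.loopless.irrefl _ (hj ▸ h), hX⟩, h⟩,
        fun ⟨⟨_, hX⟩, h⟩ => ⟨h, hX⟩⟩
  rw [← card_neighborFinset_eq_degree,
    ← Finset.card_filter_add_card_filter_not (p := (· ∈ Set.range f)), hrange, hsplit]
  congr 2
  ext z
  simp

theorem IsRegularOfDegree.sub_degree_mul_labelledCopyCount {r : ℕ} (hG : G.IsRegularOfDegree r)
    (i : W) [Fintype (X.neighborSet i)] :
    (r - X.degree i) * G.labelledCopyCount X =
      ∑ j with j ≠ i ∧ ¬X.Adj i j, G.labelledCopyCount (X ⊔ edge i j) +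
        G.labelledCopyCount (X.addPendant i) := by
  classical
  have hdeg (f : Copy X G) : r - X.degree i =
      #{j | (j ≠ i ∧ ¬X.Adj i j) ∧ G.Adj (f i) (f j)} +
        #{z | G.Adj (f i) z ∧ z ∉ Set.range f} := by
    have := f.degree_eq_add i
    rw [hG] at this
    omega
  have hchords : ∑ f : Copy X G, #{j | (j ≠ i ∧ ¬X.Adj i j) ∧ G.Adj (f i) (f j)} =
      ∑ j with j ≠ i ∧ ¬X.Adj i j, G.labelledCopyCount (X ⊔ edge i j) := by
    simp only [← Finset.filter_filter, Finset.card_filter]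
    rw [Finset.sum_comm]
    refine Finset.sum_congr rfl fun j hj => ?_
    rw [labelledCopyCount_eq_natCard, natCard_copy_sup_edge (by simp_all [eq_comm]),
      Nat.card_eq_fintype_card, Fintype.card_subtype, Finset.card_filter]
  have hpendants : ∑ f : Copy X G, #{z | G.Adj (f i) z ∧ z ∉ Set.range f} =
      G.labelledCopyCount (X.addPendant i) := by
    rw [labelledCopyCount_eq_natCard, natCard_copy_addPendant, Nat.card_sigma]
    simp only [Nat.card_eq_fintype_card, Fintype.card_subtype]
  rw [← hchords, ← hpendants, ← Finset.sum_add_distrib,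
    ← Finset.sum_congr rfl fun f _ => hdeg f, Finset.sum_const, Finset.card_univ, smul_eq_mul,
    mul_comm, labelledCopyCount_eq_natCard, Nat.card_eq_fintype_card]

end Extension

section Matchings

variable {G : SimpleGraph V} {X : SimpleGraph W}

lemma Copy.isMatching_toSubgraph (f : Copy X G) (hX : ∀ a, ∃! b, X.Adj a b) :
    f.toSubgraph.IsMatching :=
  (Subgraph.isPerfectMatching_iff.2 hX).1.map f.toHom f.injective

lemma Copy.ncard_edgeSet_toSubgraph (f : Copy X G) :
    f.toSubgraph.edgeSet.ncard = X.edgeSet.ncard := by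
  rw [Subgraph.edgeSet_map, Subgraph.edgeSet_top,
    Set.ncard_image_of_injective _ (Sym2.map.injective f.injective)]

lemma existsUnique_adj_pathGraph_two_sum_pathGraph_two :
    ∀ a, ∃! b, (pathGraph 2 ⊕g pathGraph 2).Adj a b := fun a =>
  ⟨Sum.map Fin.rev Fin.rev a, by revert a; decide, by revert a; decide⟩

lemma edgeSet_pathGraph_two_sum_pathGraph_two :
    (pathGraph 2 ⊕g pathGraph 2).edgeSet = {s(.inl 0, .inl 1), s(.inr 0, .inr 1)} := by
  ext e
  induction e using Sym2.ind with
  | h a b =>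
    simp only [mem_edgeSet, Set.mem_insert_iff, Set.mem_singleton_iff]
    revert a b
    decide

lemma Subgraph.IsMatching.ne_of_adj_of_adj {M : G.Subgraph} (hM : M.IsMatching) {a b c d : V}
    (hab : M.Adj a b) (hcd : M.Adj c d) (hne : s(a, b) ≠ s(c, d)) : a ≠ c := by
  rintro rfl
  exact hne (by rw [hM.eq_of_adj_left hab hcd])

lemma Subgraph.IsMatching.exists_copy_eq_of_ncard_edgeSet_eq_two {M : G.Subgraph}
    (hM : M.IsMatching) (h2 : M.edgeSet.ncard = 2) :
    ∃ f : Copy (pathGraph 2 ⊕g pathGraph 2) G, f.toSubgraph = M := by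
  obtain ⟨e₁, e₂, hne, hM₂⟩ := Set.ncard_eq_two.1 h2
  induction e₁ using Sym2.ind with | h a b => ?_
  induction e₂ using Sym2.ind with | h c d => ?_
  have hab : M.Adj a b := by simp [← Subgraph.mem_edgeSet, hM₂]
  have hcd : M.Adj c d := by simp [← Subgraph.mem_edgeSet, hM₂]
  have hac := hM.ne_of_adj_of_adj hab hcd hne
  have had := hM.ne_of_adj_of_adj hab hcd.symm (by rwa [Sym2.eq_swap (a := d)])
  have hbc := hM.ne_of_adj_of_adj hab.symm hcd (by rwa [Sym2.eq_swap (a := b)])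
  have hbd := hM.ne_of_adj_of_adj hab.symm hcd.symm
    (by rwa [Sym2.eq_swap (a := b), Sym2.eq_swap (a := d)])
  have hab' := M.adj_sub hab
  have hcd' := M.adj_sub hcd
  let f : Copy (pathGraph 2 ⊕g pathGraph 2) G :=
    ⟨⟨Sum.elim ![a, b] ![c, d], fun {u v} huv => ?_⟩, ?_⟩
  · refine ⟨f, IsMatching.injOn_edgeSet
      (f.isMatching_toSubgraph existsUnique_adj_pathGraph_two_sum_pathGraph_two) hM ?_⟩
    rw [Subgraph.edgeSet_map, Subgraph.edgeSet_top, edgeSet_pathGraph_two_sum_pathGraph_two,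
      Set.image_pair, hM₂]
    rfl
  · have := (mem_edgeSet _).2 huv
    rw [edgeSet_pathGraph_two_sum_pathGraph_two] at this
    rcases this with h | h <;> rcases Sym2.eq_iff.1 h with ⟨rfl, rfl⟩ | ⟨rfl, rfl⟩
    exacts [hab', hab'.symm, hcd', hcd'.symm]
  · have := hab'.ne
    have := hcd'.ne
    rintro (i | i) (j | j) h <;> fin_cases i <;> fin_cases j <;> simp_all [eq_comm]

lemma numMatchings_two_eq_numSubgraphs :
    numMatchings G 2 = numSubgraphs G (pathGraph 2 ⊕g pathGraph 2) := by
  rw [numMatchings, numSubgraphs]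
  congr 1
  ext M
  have hrange : M ∈ Set.range (Copy.toSubgraph (A := pathGraph 2 ⊕g pathGraph 2)) ↔
      Nonempty (M.coe ≃g pathGraph 2 ⊕g pathGraph 2) := by
    rw [Copy.range_toSubgraph]
    exact ⟨fun ⟨e⟩ => ⟨e.symm⟩, fun ⟨e⟩ => ⟨e.symm⟩⟩
  rw [Set.mem_ofPred_eq, Set.mem_ofPred_eq, ← hrange]
  constructor
  · rintro ⟨hM, h2⟩
    exact hM.exists_copy_eq_of_ncard_edgeSet_eq_two h2
  · rintro ⟨f, rfl⟩
    refine ⟨f.isMatching_toSubgraph existsUnique_adj_pathGraph_two_sum_pathGraph_two, ?_⟩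
    rw [f.ncard_edgeSet_toSubgraph, edgeSet_pathGraph_two_sum_pathGraph_two,
      Set.ncard_pair (by decide)]

end Matchings

section Concrete

variable [Fintype V] {G : SimpleGraph V} [DecidableRel G.Adj]

lemma two_mul_labelledCopyCount_pathGraph_two_sum_pathGraph_two (hG : G.IsRegularOfDegree 3) :
    2 * G.labelledCopyCount (pathGraph 2 ⊕g pathGraph 2) =
      2 * G.labelledCopyCount (pathGraph 4) +
        G.labelledCopyCount (pathGraph 3 ⊕g pathGraph 2) := by
  have h := hG.sub_degree_mul_labelledCopyCount (X := pathGraph 2 ⊕g pathGraph 2) (.inl 0)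
  rw [show (pathGraph 2 ⊕g pathGraph 2).degree (.inl 0) = 1 by
      rw [← card_neighborSet_eq_degree, Fintype.card_subtype]; decide,
    show ({j | j ≠ .inl 0 ∧ ¬(pathGraph 2 ⊕g pathGraph 2).Adj (.inl 0) j} : Finset _) =
      {.inr 0, .inr 1} by decide,
    Finset.sum_pair (by decide),
    labelledCopyCount_congr_of_bijective
      (X := (pathGraph 2 ⊕g pathGraph 2) ⊔ edge (.inl 0) (.inr 0)) (Y := pathGraph 4)
      (Sum.elim ![1, 0] ![2, 3]) (by decide) (by decide),
    labelledCopyCount_congr_of_bijective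
      (X := (pathGraph 2 ⊕g pathGraph 2) ⊔ edge (.inl 0) (.inr 1)) (Y := pathGraph 4)
      (Sum.elim ![1, 0] ![3, 2]) (by decide) (by decide),
    labelledCopyCount_congr_of_bijective (X := (pathGraph 2 ⊕g pathGraph 2).addPendant (.inl 0))
      (Y := pathGraph 3 ⊕g pathGraph 2) (·.elim (.inl 0) (Sum.map Fin.succ id)) (by decide)
      (by decide)] at h
  omega

lemma two_mul_labelledCopyCount_pathGraph_three_sum_pathGraph_two (hG : G.IsRegularOfDegree 3)
    (hG₂ : G.Colorable 2) :
    2 * G.labelledCopyCount (pathGraph 3 ⊕g pathGraph 2) =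
      2 * G.labelledCopyCount (pathGraph 5) +
        G.labelledCopyCount (pathGraph 4 ⊕g pathGraph 2) := by
  have h := hG.sub_degree_mul_labelledCopyCount (X := pathGraph 3 ⊕g pathGraph 2) (.inl 0)
  rw [show (pathGraph 3 ⊕g pathGraph 2).degree (.inl 0) = 1 by
      rw [← card_neighborSet_eq_degree, Fintype.card_subtype]; decide,
    show ({j | j ≠ .inl 0 ∧ ¬(pathGraph 3 ⊕g pathGraph 2).Adj (.inl 0) j} : Finset _) =
      {.inl 2, .inr 0, .inr 1} by decide,
    Finset.sum_insert (by decide), Finset.sum_pair (by decide),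
    labelledCopyCount_eq_zero_of_colorable hG₂ (not_colorable_two_of_adj_of_adj_of_adj
      (X := (pathGraph 3 ⊕g pathGraph 2) ⊔ edge (.inl 0) (.inl 2)) (a := .inl 0) (b := .inl 1)
      (c := .inl 2) (by decide) (by decide) (by decide)),
    labelledCopyCount_congr_of_bijective
      (X := (pathGraph 3 ⊕g pathGraph 2) ⊔ edge (.inl 0) (.inr 0)) (Y := pathGraph 5)
      (Sum.elim ![2, 1, 0] ![3, 4]) (by decide) (by decide),
    labelledCopyCount_congr_of_bijective
      (X := (pathGraph 3 ⊕g pathGraph 2) ⊔ edge (.inl 0) (.inr 1)) (Y := pathGraph 5)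
      (Sum.elim ![2, 1, 0] ![4, 3]) (by decide) (by decide),
    labelledCopyCount_congr_of_bijective (X := (pathGraph 3 ⊕g pathGraph 2).addPendant (.inl 0))
      (Y := pathGraph 4 ⊕g pathGraph 2) (·.elim (.inl 0) (Sum.map Fin.succ id)) (by decide)
      (by decide)] at h
  omega

lemma two_mul_labelledCopyCount_pathGraph_four (hG : G.IsRegularOfDegree 3)
    (hG₂ : G.Colorable 2) :
    2 * G.labelledCopyCount (pathGraph 4) =
      G.labelledCopyCount (cycleGraph 4) + G.labelledCopyCount (pathGraph 5) := by
  have h := hG.sub_degree_mul_labelledCopyCount (X := pathGraph 4) 0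
  rw [show (pathGraph 4).degree 0 = 1 by
      rw [← card_neighborSet_eq_degree, Fintype.card_subtype]; decide,
    show ({j | j ≠ 0 ∧ ¬(pathGraph 4).Adj 0 j} : Finset _) = {2, 3} by decide,
    Finset.sum_pair (by decide),
    labelledCopyCount_eq_zero_of_colorable hG₂ (not_colorable_two_of_adj_of_adj_of_adj
      (X := pathGraph 4 ⊔ edge 0 2) (a := 0) (b := 1) (c := 2) (by decide) (by decide)
      (by decide)),
    labelledCopyCount_congr_of_bijective (X := pathGraph 4 ⊔ edge 0 3) (Y := cycleGraph 4) id
      bijective_id (by decide),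
    labelledCopyCount_congr_of_bijective (X := (pathGraph 4).addPendant 0) (Y := pathGraph 5)
      (·.elim 0 Fin.succ) (by decide) (by decide)] at h
  omega

end Concrete

lemma natCard_iso_self_pathGraph_two_sum_pathGraph_two :
    Nat.card (pathGraph 2 ⊕g pathGraph 2 ≃g pathGraph 2 ⊕g pathGraph 2) = 8 := by
  rw [natCard_iso_self_eq_card]; decide

lemma natCard_iso_self_cycleGraph_four : Nat.card (cycleGraph 4 ≃g cycleGraph 4) = 8 := by
  rw [natCard_iso_self_eq_card]; decide

lemma natCard_iso_self_pathGraph_five : Nat.card (pathGraph 5 ≃g pathGraph 5) = 2 := by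
  rw [natCard_iso_self_eq_card]; decide

set_option maxRecDepth 100000 in
lemma natCard_iso_self_pathGraph_four_sum_pathGraph_two :
    Nat.card (pathGraph 4 ⊕g pathGraph 2 ≃g pathGraph 4 ⊕g pathGraph 2) = 4 := by
  rw [natCard_iso_self_eq_card]; decide

end SimpleGraph

theorem stmt_9_general {V : Type*} [Fintype V] (G : SimpleGraph V) [DecidableRel G.Adj]
    (hreg : G.IsRegularOfDegree 3) (hbip : G.Colorable 2) :
    8 * numMatchings G 2 =
      numSubgraphs G (pathGraph 4 ⊕g pathGraph 2) + 4 * numSubgraphs G (cycleGraph 4) + 2 * numSubgraphs G (pathGraph 5) := by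
  have hA := two_mul_labelledCopyCount_pathGraph_two_sum_pathGraph_two hreg
  have hB := two_mul_labelledCopyCount_pathGraph_three_sum_pathGraph_two hreg hbip
  have hC := two_mul_labelledCopyCount_pathGraph_four hreg hbip
  simp only [labelledCopyCount_eq_natCard_iso_mul_copyCount, ← numSubgraphs_eq_copyCount,
    ← numMatchings_two_eq_numSubgraphs, natCard_iso_self_pathGraph_two_sum_pathGraph_two,
    natCard_iso_self_cycleGraph_four, natCard_iso_self_pathGraph_five,
    natCard_iso_self_pathGraph_four_sum_pathGraph_two] at hA hB hC
  omega

theorem stmt_9 {V : Type*} [Fintype V] [DecidableEq V] (G : SimpleGraph V) [DecidableRel G.Adj]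
    (hreg : G.IsRegularOfDegree 3) (hbip : G.Colorable 2) :
    8 * numMatchings G 2 =
      numSubgraphs G (pathGraph 4 ⊕g pathGraph 2) + 4 * numSubgraphs G (cycleGraph 4) + 2 * numSubgraphs G (pathGraph 5) :=
  stmt_9_general G hreg hbip
end
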